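/- arXiv:2004.10259 — 3 statements merged into one kernel-verified Lean document; each statement's English description precedes it below -/
import Mathlib

section
/- Let X₁, X₂, …, Xₙ be independent real-valued random variables on a probability space (Ω, 𝔉, ℙ), each symmetric (X_k and −X_k have the same distribution), with partial sums S_k = X₁ + ⋯ + X_k. Then for every λ > 0, ℙ(max_{1 ≤ k ≤ n} |S_k| > λ) ≤ 2 ℙ(|S_n| > λ). -/
/-! Reflection principle. Let `F k` be the event that `|S j|` exceeds `λ` for the first time at
`j = k`. Flipping the signs of `X (k + 1), …, X n` preserves the joint law (by independence and
symmetry), fixes `F k`, and sends `S n` to `2 S k - S n`. Since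
`|S n| + |2 S k - S n| ≥ 2 |S k| > 2λ`, on `F k` one of the two exceeds `λ`, so
`ℙ(F k) ≤ 2 ℙ(F k ∩ {|S n| > λ})`; sum over the disjoint events `F k`. -/

open MeasureTheory ProbabilityTheory Finset
open scoped ENNReal

section
variable {Ω : Type*} [MeasurableSpace Ω] {μ : Measure Ω}

lemma measurePreserving_neg_map {β : Type*} [MeasurableSpace β] [Neg β] [MeasurableNeg β]
    {Y : Ω → β} (hY : AEMeasurable Y μ) (hsym : μ.map Y = μ.map (fun ω => -Y ω)) :
    MeasurePreserving Neg.neg (μ.map Y) (μ.map Y) :=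
  ⟨measurable_neg, by
    rw [AEMeasurable.map_map_of_aemeasurable measurable_neg.aemeasurable hY]; exact hsym.symm⟩

lemma ProbabilityTheory.iIndepFun.measurePreserving_map_pi {ι : Type*} [Fintype ι]
    {β : ι → Type*} [∀ i, MeasurableSpace (β i)] {f : ∀ i, Ω → β i}
    (hf : ∀ i, AEMeasurable (f i) μ)
    (h : iIndepFun f μ) {g : ∀ i, β i → β i}
    (hg : ∀ i, MeasurePreserving (g i) (μ.map (f i)) (μ.map (f i))) :
    MeasurePreserving (fun x i => g i (x i))
      (μ.map fun ω i => f i ω) (μ.map fun ω i => f i ω) := by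
  have := h.isProbabilityMeasure
  rw [h.map_fun_eq_pi_map hf]
  exact measurePreserving_pi _ _ hg

end

lemma MeasureTheory.measure_biUnion_le_mul_of_le_mul_inter {α ι : Type*} [MeasurableSpace α]
    {μ : Measure α} {s : Finset ι} {C : ι → Set α} {T : Set α} {c : ℝ≥0∞}
    (hd : (s : Set ι).PairwiseDisjoint C) (hC : ∀ i ∈ s, MeasurableSet (C i))
    (hT : MeasurableSet T) (h : ∀ i ∈ s, μ (C i) ≤ c * μ (C i ∩ T)) :
    μ (⋃ i ∈ s, C i) ≤ c * μ T :=
  calc μ (⋃ i ∈ s, C i) ≤ ∑ i ∈ s, μ (C i) := measure_biUnion_finset_le _ _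
    _ ≤ ∑ i ∈ s, c * μ (C i ∩ T) := sum_le_sum h
    _ = c * μ (⋃ i ∈ s, C i ∩ T) := by
      rw [← mul_sum, measure_biUnion_finset (hd.mono fun i => Set.inter_subset_left)
        fun i hi => (hC i hi).inter hT]
    _ ≤ c * μ T := by gcongr; exact Set.iUnion₂_subset fun i _ => Set.inter_subset_right

namespace LevyInequality

variable {n : ℕ}

def partialSum (x : Fin n → ℝ) (k : ℕ) : ℝ := ∑ i : Fin n with i.val < k, x i

def reflectFrom (k : ℕ) (x : Fin n → ℝ) : Fin n → ℝ :=
  fun i => if i.val < k then x i else -x i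

lemma measurable_partialSum (k : ℕ) : Measurable fun x : Fin n → ℝ => partialSum x k :=
  Finset.measurable_sum _ fun i _ => measurable_pi_apply i

lemma partialSum_shift_eq_sum_Icc {f : ℕ → ℝ} {k : ℕ} (hk : k ≤ n) :
    partialSum (fun i : Fin n => f (i + 1)) k = ∑ i ∈ Icc 1 k, f i := by
  rw [partialSum, sum_filter,
    Fin.sum_univ_eq_sum_range (fun i => if i < k then f (i + 1) else 0), ← sum_filter,
    show (range n).filter (· < k) = range k by ext; simp; omega, range_eq_Ico,
    sum_Ico_add']
  rfl

lemma partialSum_reflectFrom_of_le {j k : ℕ} (hjk : j ≤ k) (x : Fin n → ℝ) :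
    partialSum (reflectFrom k x) j = partialSum x j :=
  sum_congr rfl fun _ hi => if_pos ((mem_filter.1 hi).2.trans_le hjk)

lemma partialSum_reflectFrom_top (k : ℕ) (x : Fin n → ℝ) :
    partialSum (reflectFrom k x) n = 2 * partialSum x k - partialSum x n := by
  have hall : ∀ y : Fin n → ℝ, partialSum y n = ∑ i, y i := fun y =>
    sum_congr (filter_true_of_mem fun i _ => i.isLt) fun _ _ => rfl
  rw [hall, hall, partialSum,
    ← sum_filter_add_sum_filter_not univ (fun i : Fin n => i.val < k) x]
  simp only [reflectFrom, sum_ite, sum_neg_distrib]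
  ring

def exceedsAt (l : ℝ) (k : ℕ) : Set (Fin n → ℝ) := {x | l < |partialSum x k|}

lemma measurableSet_exceedsAt (l : ℝ) (k : ℕ) : MeasurableSet (exceedsAt (n := n) l k) :=
  measurableSet_lt measurable_const (measurable_partialSum k).abs

def firstExit (l : ℝ) (k : ℕ) : Set (Fin n → ℝ) :=
  {x | (∀ j ∈ Ico 1 k, |partialSum x j| ≤ l) ∧ l < |partialSum x k|}

lemma measurableSet_firstExit (l : ℝ) (k : ℕ) : MeasurableSet (firstExit (n := n) l k) := by
  have : firstExit (n := n) l k
      = (⋂ j ∈ Ico 1 k, {x | |partialSum x j| ≤ l}) ∩ {x | l < |partialSum x k|} := by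
    ext x; simp [firstExit]
  rw [this]
  exact (MeasurableSet.biInter (Ico 1 k).countable_toSet fun j _ =>
    measurableSet_le (measurable_partialSum j).abs measurable_const).inter
    (measurableSet_exceedsAt l k)

lemma preimage_reflectFrom_firstExit (l : ℝ) (k : ℕ) :
    reflectFrom k ⁻¹' firstExit (n := n) l k = firstExit l k := by
  ext x
  simp only [firstExit, Set.mem_preimage, Set.mem_ofPred_eq, partialSum_reflectFrom_of_le le_rfl]
  exact and_congr_left' <| forall₂_congr fun j hj => by
    rw [partialSum_reflectFrom_of_le (mem_Ico.1 hj).2.le]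

lemma pairwiseDisjoint_firstExit (l : ℝ) :
    (Set.Ici 1).PairwiseDisjoint (firstExit (n := n) l) := by
  intro a ha b _ hab
  refine Set.disjoint_left.2 fun x hxa hxb => ?_
  rcases hab.lt_or_gt with h | h
  · exact (hxb.1 a (mem_Ico.2 ⟨ha, h⟩)).not_gt hxa.2
  · exact (hxa.1 b (mem_Ico.2 ⟨Set.mem_Ici.1 ‹_›, h⟩)).not_gt hxb.2

lemma setOf_exists_subset_biUnion_firstExit (l : ℝ) :
    {x : Fin n → ℝ | ∃ k, 1 ≤ k ∧ k ≤ n ∧ l < |partialSum x k|}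
      ⊆ ⋃ k ∈ Icc 1 n, firstExit l k := by
  classical
  intro x hx
  obtain ⟨hk1, hkn, hlk⟩ := Nat.find_spec hx
  refine Set.mem_biUnion (mem_coe.2 (mem_Icc.2 ⟨hk1, hkn⟩)) ⟨fun j hj => ?_, hlk⟩
  obtain ⟨hj1, hj⟩ := mem_Ico.1 hj
  exact not_lt.1 fun h => Nat.find_min hx hj ⟨hj1, by omega, h⟩

lemma firstExit_subset_union_preimage_reflectFrom (l : ℝ) (k : ℕ) :
    firstExit l k ⊆ (firstExit l k ∩ exceedsAt l n)
      ∪ reflectFrom k ⁻¹' (firstExit l k ∩ exceedsAt (n := n) l n) := by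
  intro x hx
  by_cases hxn : l < |partialSum x n|
  · exact Or.inl ⟨hx, hxn⟩
  · have hxk := hx.2
    rw [← preimage_reflectFrom_firstExit] at hx
    refine Or.inr ⟨hx, ?_⟩
    have h := abs_add_le (2 * partialSum x k - partialSum x n) (partialSum x n)
    rw [sub_add_cancel, abs_mul, abs_two] at h
    show l < |partialSum (reflectFrom k x) n|
    rw [partialSum_reflectFrom_top]
    linarith [not_lt.1 hxn]

lemma measure_firstExit_le (ν : Measure (Fin n → ℝ)) {k : ℕ}
    (hR : MeasurePreserving (reflectFrom k) ν ν) (l : ℝ) :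
    ν (firstExit l k) ≤ 2 * ν (firstExit l k ∩ exceedsAt l n) := by
  have hmeas : NullMeasurableSet (firstExit l k ∩ exceedsAt l n) ν :=
    ((measurableSet_firstExit l k).inter (measurableSet_exceedsAt l n)).nullMeasurableSet
  calc ν (firstExit l k)
      ≤ ν (firstExit l k ∩ exceedsAt l n)
        + ν (reflectFrom k ⁻¹' (firstExit l k ∩ exceedsAt l n)) :=
        (measure_mono (firstExit_subset_union_preimage_reflectFrom l k)).trans
          (measure_union_le _ _)
    _ = 2 * ν (firstExit l k ∩ exceedsAt l n) := by rw [hR.measure_preimage hmeas, two_mul]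

theorem measure_exists_lt_abs_partialSum_le (ν : Measure (Fin n → ℝ))
    (hR : ∀ k, MeasurePreserving (reflectFrom k) ν ν) (l : ℝ) :
    ν {x | ∃ k, 1 ≤ k ∧ k ≤ n ∧ l < |partialSum x k|} ≤ 2 * ν (exceedsAt l n) :=
  (measure_mono (setOf_exists_subset_biUnion_firstExit l)).trans <|
    measure_biUnion_le_mul_of_le_mul_inter
      ((pairwiseDisjoint_firstExit l).subset fun _ hk => (mem_Icc.1 hk).1)
      (fun k _ => measurableSet_firstExit l k)
      (measurableSet_exceedsAt l n) fun k _ => measure_firstExit_le ν (hR k) l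

lemma measurePreserving_reflectFrom_map {Ω : Type*} [MeasurableSpace Ω] (μ : Measure Ω)
    {Y : Fin n → Ω → ℝ} (hY : ∀ i, AEMeasurable (Y i) μ) (hind : iIndepFun Y μ)
    (hsym : ∀ i, μ.map (Y i) = μ.map (fun ω => -Y i ω)) (k : ℕ) :
    MeasurePreserving (reflectFrom k) (μ.map fun ω i => Y i ω) (μ.map fun ω i => Y i ω) := by
  have hflip : ∀ i, MeasurePreserving (if i.val < k then id else Neg.neg)
      (μ.map (Y i)) (μ.map (Y i)) := fun i => by
    split_ifs
    · exact MeasurePreserving.id _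
    · exact measurePreserving_neg_map (hY i) (hsym i)
  convert hind.measurePreserving_map_pi hY hflip using 1
  funext x i
  simp only [reflectFrom]
  split_ifs <;> rfl

end LevyInequality

open LevyInequality

theorem classical_levy_inequality_abs_general {Ω : Type*} [MeasurableSpace Ω]
    (μ : Measure Ω) [IsProbabilityMeasure μ]
    (n : ℕ) (X : ℕ → Ω → ℝ)
    (hmeas : ∀ k, Measurable (X k))
    (hindep : iIndepFun (fun i : Fin n => X (i + 1)) μ)
    (hsym : ∀ k, 1 ≤ k → k ≤ n →
      Measure.map (X k) μ = Measure.map (fun ω => -X k ω) μ)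
    (S : ℕ → Ω → ℝ) (hS : ∀ k, S k = fun ω => ∑ i ∈ Finset.Icc 1 k, X i ω)
    (l : ℝ) :
    μ {ω | ∃ k, 1 ≤ k ∧ k ≤ n ∧ l < |S k ω|} ≤ 2 * μ {ω | l < |S n ω|} := by
  set V : Ω → Fin n → ℝ := fun ω i => X (i + 1) ω
  have hV : Measurable V := measurable_pi_lambda _ fun i => hmeas _
  have hR := measurePreserving_reflectFrom_map μ (fun i => (hmeas _).aemeasurable) hindep
    fun i => hsym _ (Nat.le_add_left 1 i) i.isLt
  have hSV : ∀ k ≤ n, ∀ ω, S k ω = partialSum (V ω) k := fun k hk ω => by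
    rw [hS]; exact (partialSum_shift_eq_sum_Icc hk).symm
  calc μ {ω | ∃ k, 1 ≤ k ∧ k ≤ n ∧ l < |S k ω|}
      = μ (V ⁻¹' {x | ∃ k, 1 ≤ k ∧ k ≤ n ∧ l < |partialSum x k|}) := by
        congr 1; ext ω
        exact exists_congr fun k => and_congr_right fun _ => and_congr_right fun hk => by
          rw [hSV k hk]
    _ ≤ μ.map V {x | ∃ k, 1 ≤ k ∧ k ≤ n ∧ l < |partialSum x k|} :=
        Measure.le_map_apply hV.aemeasurable _
    _ ≤ 2 * μ.map V (exceedsAt l n) := measure_exists_lt_abs_partialSum_le _ hR l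
    _ = 2 * μ {ω | l < |S n ω|} := by
        rw [Measure.map_apply hV (measurableSet_exceedsAt l n)]
        simp only [exceedsAt, Set.preimage_ofPred_eq, hSV n le_rfl]

/-- **Classical Lévy inequality, absolute-value form.**  If `X 1, …, X n` are
independent symmetric real random variables with partial sums `S k`, then for `λ > 0`,
`ℙ(max_{1 ≤ k ≤ n} |S k| > λ) ≤ 2 ℙ(|S n| > λ)`. -/
theorem classical_levy_inequality_abs {Ω : Type*} [MeasurableSpace Ω]
    (μ : Measure Ω) [IsProbabilityMeasure μ]
    (n : ℕ) (hn : 1 ≤ n) (X : ℕ → Ω → ℝ)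
    (hmeas : ∀ k, Measurable (X k))
    (hindep : iIndepFun (fun i : Fin n => X (i + 1)) μ)
    (hsym : ∀ k, 1 ≤ k → k ≤ n →
      Measure.map (X k) μ = Measure.map (fun ω => -X k ω) μ)
    (S : ℕ → Ω → ℝ) (hS : ∀ k, S k = fun ω => ∑ i ∈ Finset.Icc 1 k, X i ω)
    (l : ℝ) (hl : 0 < l) :
    μ {ω | ∃ k, 1 ≤ k ∧ k ≤ n ∧ l < |S k ω|} ≤ 2 * μ {ω | l < |S n ω|} :=
  classical_levy_inequality_abs_general μ n X hmeas hindep hsym S hS l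
end

section
/- Let X₁, X₂, …, Xₙ be independent real-valued random variables on a probability space (Ω, 𝔉, ℙ) with partial sums S_k = X₁ + ⋯ + X_k. Then for every λ > 0 and every 0 < α < 1, ℙ(max_{1 ≤ k ≤ n} S_k > λ) · min_{1 ≤ k ≤ n} ℙ(S_n − S_k ≥ −(1 − α)λ) ≤ ℙ(S_n > αλ). -/
open MeasureTheory ProbabilityTheory

/-!
Split the event `max_k S k > λ` according to the first time `k` at which `S k > λ`. That
first-passage event depends only on `X 1, …, X k`, hence is independent of `S n - S k`, and on
its intersection with `{S n - S k ≥ -(1 - α) λ}` we have `S n > λ - (1 - α) λ = α λ`. Summing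
over the disjoint first-passage events and bounding each `ℙ(S n - S k ≥ -(1 - α) λ)` below by
the minimum gives the inequality.
-/

open Finset in
lemma sum_Icc_one_add_sum_Icc_succ {M : Type*} [AddCommMonoid M] (f : ℕ → M) {k n : ℕ}
    (hkn : k ≤ n) : ∑ i ∈ Icc 1 k, f i + ∑ i ∈ Icc (k + 1) n, f i = ∑ i ∈ Icc 1 n, f i := by
  simpa only [← Finset.Icc_add_one_left_eq_Ioc, zero_add] using
    sum_Ioc_consecutive f (Nat.zero_le k) hkn

section FirstPassage

variable {Ω : Type*} (S : ℕ → Ω → ℝ) (l : ℝ)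

def firstPassage (k : ℕ) : Set Ω := {ω | l < S k ω ∧ ∀ j, 1 ≤ j → j < k → S j ω ≤ l}

lemma pairwiseDisjoint_firstPassage : (Set.Ici 1).PairwiseDisjoint (firstPassage S l) := by
  intro i hi j hj hij
  refine Set.disjoint_left.mpr fun ω hωi hωj => ?_
  rcases hij.lt_or_gt with h | h
  · exact (hωj.2 i hi h).not_gt hωi.1
  · exact (hωi.2 j hj h).not_gt hωj.1

lemma setOf_exists_lt_eq_biUnion_firstPassage (n : ℕ) :
    {ω | ∃ k, 1 ≤ k ∧ k ≤ n ∧ l < S k ω} = ⋃ k ∈ Finset.Icc 1 n, firstPassage S l k := by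
  classical
  ext ω
  simp only [Set.mem_ofPred_eq, Set.mem_iUnion, Finset.mem_Icc, exists_prop]
  constructor
  · rintro ⟨k, hk1, hkn, hk⟩
    have hex : ∃ m, 1 ≤ m ∧ l < S m ω := ⟨k, hk1, hk⟩
    obtain ⟨hfirst1, hfirst⟩ := Nat.find_spec hex
    refine ⟨Nat.find hex, ⟨hfirst1, (Nat.find_min' hex ⟨hk1, hk⟩).trans hkn⟩, hfirst,
      fun j hj1 hj => ?_⟩
    exact le_of_not_gt fun hlt => Nat.find_min hex hj ⟨hj1, hlt⟩
  · rintro ⟨k, hk, hlt, -⟩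
    exact ⟨k, hk.1, hk.2, hlt⟩

lemma measurableSet_firstPassage {m : MeasurableSpace Ω} {k : ℕ}
    (hS : ∀ j ≤ k, Measurable[m] (S j)) : MeasurableSet[m] (firstPassage S l k) := by
  simp only [firstPassage, Set.ofPred_and, Set.ofPred_forall]
  refine (measurableSet_lt measurable_const (hS k le_rfl)).inter ?_
  exact .iInter fun j => .iInter fun _ => .iInter fun hj =>
    measurableSet_le (hS j hj.le) measurable_const

end FirstPassage

lemma measurable_sum_of_subset_iSup_comap {Ω ι : Type*} (X : ι → Ω → ℝ) {s t : Finset ι}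
    (hts : t ⊆ s) :
    Measurable[⨆ i ∈ s, MeasurableSpace.comap (X i) inferInstance] fun ω => ∑ i ∈ t, X i ω :=
  Finset.measurable_sum t fun i hi => (comap_measurable (X i)).mono
    (le_iSup₂ (f := fun i (_ : i ∈ s) => MeasurableSpace.comap (X i) inferInstance) i (hts hi))
    le_rfl

lemma indep_iSup_comap_of_disjoint {Ω : Type*} [MeasurableSpace Ω] {μ : Measure Ω} {n : ℕ}
    {X : ℕ → Ω → ℝ} (hmeas : ∀ k, Measurable (X k))
    (hindep : iIndepFun (fun i : Fin n => X (i + 1)) μ) {s t : Finset ℕ}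
    (hs : s ⊆ Finset.Icc 1 n) (ht : t ⊆ Finset.Icc 1 n) (hst : Disjoint s t) :
    Indep (⨆ j ∈ s, MeasurableSpace.comap (X j) inferInstance)
      (⨆ j ∈ t, MeasurableSpace.comap (X j) inferInstance) μ := by
  set e : Fin n → ℕ := fun i => i + 1
  have hrange : ∀ u ⊆ Finset.Icc 1 n, (u : Set ℕ) ⊆ Set.range e := fun u hu j hj => by
    have := Finset.mem_Icc.1 (hu hj)
    exact ⟨⟨j - 1, by omega⟩, by simp only [e]; omega⟩
  have hreindex : ∀ u ⊆ Finset.Icc 1 n, ⨆ j ∈ u, MeasurableSpace.comap (X j) inferInstance =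
      ⨆ i ∈ e ⁻¹' u, MeasurableSpace.comap (X (e i)) inferInstance := fun u hu => by
    rw [← iSup_image (g := fun j => MeasurableSpace.comap (X j) inferInstance),
      Set.image_preimage_eq_of_subset (hrange u hu)]
    rfl
  rw [hreindex s hs, hreindex t ht]
  exact indep_iSup_of_disjoint (fun i => (hmeas _).comap_le)
    ((iIndepFun_iff_iIndep _ _ _).1 hindep) ((Finset.disjoint_coe.2 hst).preimage e)

lemma measure_biUnion_mul_inf'_le {Ω ι : Type*} [MeasurableSpace Ω] {μ : Measure Ω}
    {s : Finset ι} (hs : s.Nonempty) {A B : ι → Set Ω} {C : Set Ω}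
    (hA : ∀ i ∈ s, MeasurableSet (A i)) (hB : ∀ i ∈ s, MeasurableSet (B i))
    (hdisj : (s : Set ι).PairwiseDisjoint A) (hAB : ∀ i ∈ s, μ (A i) * μ (B i) ≤ μ (A i ∩ B i))
    (hC : ∀ i ∈ s, A i ∩ B i ⊆ C) :
    μ (⋃ i ∈ s, A i) * s.inf' hs (fun i => μ (B i)) ≤ μ C :=
  calc μ (⋃ i ∈ s, A i) * s.inf' hs (fun i => μ (B i))
      = ∑ i ∈ s, μ (A i) * s.inf' hs (fun i => μ (B i)) := by
        rw [measure_biUnion_finset hdisj hA, Finset.sum_mul]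
    _ ≤ ∑ i ∈ s, μ (A i ∩ B i) :=
        Finset.sum_le_sum fun i hi => (mul_le_mul_right (Finset.inf'_le _ hi) _).trans (hAB i hi)
    _ = μ (⋃ i ∈ s, A i ∩ B i) :=
        (measure_biUnion_finset (hdisj.mono fun _ => Set.inter_subset_left)
          fun i hi => (hA i hi).inter (hB i hi)).symm
    _ ≤ μ C := measure_mono (Set.iUnion₂_subset hC)

lemma measure_firstPassage_inter_eq_mul {Ω : Type*} [MeasurableSpace Ω] {μ : Measure Ω} {n : ℕ}
    {X : ℕ → Ω → ℝ} (hmeas : ∀ k, Measurable (X k))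
    (hindep : iIndepFun (fun i : Fin n => X (i + 1)) μ)
    {S : ℕ → Ω → ℝ} (hS : ∀ k, S k = fun ω => ∑ i ∈ Finset.Icc 1 k, X i ω) (l : ℝ) {k : ℕ}
    (hkn : k ≤ n) {B : Set ℝ} (hB : MeasurableSet B) :
    μ (firstPassage S l k ∩ (S n - S k) ⁻¹' B) =
      μ (firstPassage S l k) * μ ((S n - S k) ⁻¹' B) := by
  have hdisj : Disjoint (Finset.Icc 1 k) (Finset.Icc (k + 1) n) :=
    Finset.disjoint_left.2 fun j h1 h2 => by simp only [Finset.mem_Icc] at h1 h2; omega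
  refine (Indep_iff _ _ μ).1 (indep_iSup_comap_of_disjoint hmeas hindep
    (Finset.Icc_subset_Icc le_rfl hkn) (Finset.Icc_subset_Icc (by omega) le_rfl) hdisj) _ _ ?_ ?_
  · refine measurableSet_firstPassage S l fun j hj => ?_
    rw [hS j]
    exact measurable_sum_of_subset_iSup_comap X (Finset.Icc_subset_Icc le_rfl hj)
  · have htail : S n - S k = fun ω => ∑ i ∈ Finset.Icc (k + 1) n, X i ω := by
      funext ω
      simp only [hS, Pi.sub_apply, ← sum_Icc_one_add_sum_Icc_succ _ hkn, add_sub_cancel_left]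
    rw [htail]
    exact measurable_sum_of_subset_iSup_comap X subset_rfl hB

theorem classical_levy_skorohod_inequality_general {Ω : Type*} [MeasurableSpace Ω]
    (μ : Measure Ω)
    (n : ℕ) (hn : 1 ≤ n) (X : ℕ → Ω → ℝ)
    (hmeas : ∀ k, Measurable (X k))
    (hindep : iIndepFun (fun i : Fin n => X (i + 1)) μ)
    (S : ℕ → Ω → ℝ) (hS : ∀ k, S k = fun ω => ∑ i ∈ Finset.Icc 1 k, X i ω)
    (l : ℝ) (a : ℝ) :
    μ {ω | ∃ k, 1 ≤ k ∧ k ≤ n ∧ l < S k ω} *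
        (Finset.Icc 1 n).inf' (Finset.nonempty_Icc.mpr hn)
          (fun k => μ {ω | -(1 - a) * l ≤ S n ω - S k ω}) ≤
      μ {ω | a * l < S n ω} := by
  have hSmeas : ∀ k, Measurable (S k) := fun k => by
    rw [hS k]
    exact Finset.measurable_sum _ fun i _ => hmeas i
  rw [setOf_exists_lt_eq_biUnion_firstPassage]
  refine measure_biUnion_mul_inf'_le _
    (fun k _ => measurableSet_firstPassage S l fun j _ => hSmeas j)
    (fun k _ => measurableSet_le measurable_const ((hSmeas n).sub (hSmeas k)))
    ((pairwiseDisjoint_firstPassage S l).subset fun k hk => (Finset.mem_Icc.1 hk).1)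
    (fun k hk => (measure_firstPassage_inter_eq_mul hmeas hindep hS l
      (Finset.mem_Icc.1 hk).2 measurableSet_Ici).ge) ?_
  rintro k - ω ⟨⟨hk, -⟩, htail⟩
  change -(1 - a) * l ≤ S n ω - S k ω at htail
  change a * l < S n ω
  linarith

/-- **Classical Lévy–Skorohod inequality.**  If `X 1, …, X n` are independent real
random variables with partial sums `S k`, then for `λ > 0` and `0 < α < 1`,
`ℙ(max_{1 ≤ k ≤ n} S k > λ) ⋅ min_{1 ≤ k ≤ n} ℙ(S n - S k ≥ -(1-α)λ) ≤ ℙ(S n > αλ)`. -/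
theorem classical_levy_skorohod_inequality {Ω : Type*} [MeasurableSpace Ω]
    (μ : Measure Ω) [IsProbabilityMeasure μ]
    (n : ℕ) (hn : 1 ≤ n) (X : ℕ → Ω → ℝ)
    (hmeas : ∀ k, Measurable (X k))
    (hindep : iIndepFun (fun i : Fin n => X (i + 1)) μ)
    (S : ℕ → Ω → ℝ) (hS : ∀ k, S k = fun ω => ∑ i ∈ Finset.Icc 1 k, X i ω)
    (l : ℝ) (hl : 0 < l) (a : ℝ) (ha0 : 0 < a) (ha1 : a < 1) :
    μ {ω | ∃ k, 1 ≤ k ∧ k ≤ n ∧ l < S k ω} *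
        (Finset.Icc 1 n).inf' (Finset.nonempty_Icc.mpr hn)
          (fun k => μ {ω | -(1 - a) * l ≤ S n ω - S k ω}) ≤
      μ {ω | a * l < S n ω} :=
  classical_levy_skorohod_inequality_general μ n hn X hmeas hindep S hS l a
end

section
/- Let x ∈ 𝔐 be self-adjoint with median m, and set x̂ := x ⊗ 1 − 1 ⊗ x in 𝔐 ⊗ 𝔐 with trace τ ⊗ τ. Then for every λ ∈ ℝ, τ(e_λ^⊥(x − m)) ≤ 2 (τ ⊗ τ)(e_λ^⊥(x̂)). -/
open scoped NNReal

/-- A *quantum probability space*: a von Neumann algebra `M` (presented as a unital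
C⋆-algebra; the weak closure properties that we use are recorded explicitly as axioms
below) together with a normal faithful tracial state `τ` and, for every self-adjoint
element `x` and every Borel set `B ⊆ ℝ`, the spectral projection `specProj x B = E_x(B)`
coming from the spectral resolution `x = ∫ λ dE_x(λ)`. -/
structure QuantumProbabilitySpace (M : Type*) [CStarAlgebra M] [PartialOrder M]
    [StarOrderedRing M] where
  /-- the state -/
  τ : M →ₗ[ℂ] ℂ
  tracial : ∀ a b : M, τ (a * b) = τ (b * a)
  normalized : τ 1 = 1
  pos : ∀ a : M, 0 ≤ a → 0 ≤ (τ a).re ∧ (τ a).im = 0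
  faithful : ∀ a : M, 0 ≤ a → τ a = 0 → a = 0
  /-- spectral projections of self-adjoint elements -/
  specProj : M → Set ℝ → M
  specProj_isIdempotentElem : ∀ (x : M) (B : Set ℝ), IsSelfAdjoint x → MeasurableSet B →
    IsIdempotentElem (specProj x B)
  specProj_isSelfAdjoint : ∀ (x : M) (B : Set ℝ), IsSelfAdjoint x → MeasurableSet B →
    IsSelfAdjoint (specProj x B)
  specProj_univ : ∀ x : M, IsSelfAdjoint x → specProj x Set.univ = 1
  specProj_inter : ∀ (x : M) (B C : Set ℝ), IsSelfAdjoint x → MeasurableSet B →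
    MeasurableSet C → specProj x (B ∩ C) = specProj x B * specProj x C
  /-- normality of the state: the spectral distribution is countably additive -/
  specProj_iUnion : ∀ (x : M) (B : ℕ → Set ℝ), IsSelfAdjoint x → (∀ n, MeasurableSet (B n)) →
    Pairwise (Function.onFun Disjoint B) →
    HasSum (fun n => τ (specProj x (B n))) (τ (specProj x (⋃ n, B n)))
  specProj_commute : ∀ (x : M) (B : Set ℝ), IsSelfAdjoint x → MeasurableSet B →
    Commute x (specProj x B)
  /-- the spectral measure is supported on the spectrum -/
  specProj_spectrum : ∀ (x : M) (B : Set ℝ), IsSelfAdjoint x → MeasurableSet B →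
    specProj x B = specProj x (B ∩ spectrum ℝ x)
  /-- `x` compressed to `E_x((-∞, t])` is at most `t` -/
  specProj_le : ∀ (x : M) (t : ℝ), IsSelfAdjoint x →
    specProj x (Set.Iic t) * x * specProj x (Set.Iic t) ≤ (t : ℂ) • specProj x (Set.Iic t)
  /-- `x` compressed to `E_x([t, ∞))` is at least `t` -/
  specProj_ge : ∀ (x : M) (t : ℝ), IsSelfAdjoint x →
    (t : ℂ) • specProj x (Set.Ici t) ≤ specProj x (Set.Ici t) * x * specProj x (Set.Ici t)
  /-- compatibility with the functional calculus: `E_{f(x)}(B) = E_x(f⁻¹(B))` -/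
  specProj_cfc : ∀ (x : M) (f : ℝ → ℝ) (B : Set ℝ), IsSelfAdjoint x → Continuous f →
    MeasurableSet B → specProj (cfc f x) B = specProj x (f ⁻¹' B)
  /-- the spectral distribution of a (bounded) self-adjoint element is determined by
  its moments -/
  moments_determine : ∀ x y : M, IsSelfAdjoint x → IsSelfAdjoint y →
    (∀ n : ℕ, τ (x ^ n) = τ (y ^ n)) →
    ∀ B : Set ℝ, MeasurableSet B → τ (specProj x B) = τ (specProj y B)

/-- a projection in a von Neumann algebra: a self-adjoint idempotent -/
def IsProjection {M : Type*} [CStarAlgebra M] [PartialOrder M] [StarOrderedRing M]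
    (p : M) : Prop := IsSelfAdjoint p ∧ IsIdempotentElem p

/-- `r` is the supremum `⋁ F` of a family `F` of projections in the lattice of
projections of a von Neumann algebra -/
def IsSupProjection {M : Type*} [CStarAlgebra M] [PartialOrder M] [StarOrderedRing M]
    (F : Set M) (r : M) : Prop :=
  IsProjection r ∧ (∀ p ∈ F, p * r = p) ∧
    ∀ s : M, IsProjection s → (∀ p ∈ F, p * s = p) → r * s = r

/-- the absolute value `|x| = (x⋆x)^{1/2}` of an element of a C⋆-algebra -/
noncomputable def qAbs {M : Type*} [CStarAlgebra M] [PartialOrder M] [StarOrderedRing M]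
    (x : M) : M := CFC.sqrt (star x * x)

namespace QuantumProbabilitySpace

variable {M : Type*} [CStarAlgebra M] [PartialOrder M] [StarOrderedRing M]
variable (Q : QuantumProbabilitySpace M)

/-- the spectral distribution `B ↦ τ(E_x(B))` of a self-adjoint `x` -/
noncomputable def prob (x : M) (B : Set ℝ) : ℝ := (Q.τ (Q.specProj x B)).re


/-- `m` is a median of the self-adjoint element `x`:
`τ(e_{(-∞, m]}(x)) ≥ 1/2` and `τ(e_m^⊥(x)) = τ(e_{[m, ∞)}(x)) ≥ 1/2`. -/
def IsMedian (x : M) (m : ℝ) : Prop :=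
  1 / 2 ≤ Q.prob x (Set.Iic m) ∧ 1 / 2 ≤ Q.prob x (Set.Ici m)

/-- two self-adjoint random variables are identically distributed if their spectral
distributions coincide -/
def IdentDistrib (x y : M) : Prop :=
  ∀ B : Set ℝ, MeasurableSet B → Q.τ (Q.specProj x B) = Q.τ (Q.specProj y B)

/-- a self-adjoint random variable is symmetric if `x` and `-x` are identically
distributed -/
def IsSymmetric (x : M) : Prop := Q.IdentDistrib x (-x)

/-- the von Neumann subalgebra `W*(S)` generated by a set `S`: the smallest subset
containing `S` which is a unital star subalgebra closed under taking spectral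
projections (the abstract surrogate for weak closedness). -/
def wstar (S : Set M) : Set M :=
  ⋂₀ {A : Set M | S ⊆ A ∧ (1 : M) ∈ A ∧ (∀ a ∈ A, ∀ b ∈ A, a + b ∈ A) ∧
    (∀ a ∈ A, ∀ b ∈ A, a * b ∈ A) ∧ (∀ (c : ℂ), ∀ a ∈ A, c • a ∈ A) ∧
    (∀ a ∈ A, star a ∈ A) ∧
    (∀ a ∈ A, ∀ B : Set ℝ, MeasurableSet B → Q.specProj a B ∈ A)}

/-- the `p`-th power `‖x‖_p^p = τ(|x|^p)` of the noncommutative `L_p`-norm -/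
noncomputable def lpNormPow (x : M) (p : ℝ) : ℝ := (Q.τ (CFC.rpow (qAbs x) p)).re

end QuantumProbabilitySpace


/-- A realization of the von Neumann tensor product `M ⊗ M`: a quantum probability
space `(N, R.τ)` together with two unital trace-commuting ⋆-embeddings
`ι₁ : x ↦ x ⊗ 1` and `ι₂ : x ↦ 1 ⊗ x` whose ranges commute, such that the trace is
multiplicative on products, `(τ ⊗ τ)((a ⊗ 1)(1 ⊗ b)) = τ(a) τ(b)` (tensor
independence of the two copies), and which are compatible with spectral
projections (i.e. are normal). -/
structure QuantumProbabilitySpace.IsTensorSquare {M N : Type*}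
    [CStarAlgebra M] [PartialOrder M] [StarOrderedRing M]
    [CStarAlgebra N] [PartialOrder N] [StarOrderedRing N]
    (Q : QuantumProbabilitySpace M) (R : QuantumProbabilitySpace N)
    (i1 i2 : M →⋆ₐ[ℂ] N) : Prop where
  commutes : ∀ a b : M, Commute (i1 a) (i2 b)
  trace_mul : ∀ a b : M, R.τ (i1 a * i2 b) = Q.τ a * Q.τ b
  specProj_fst : ∀ (a : M) (B : Set ℝ), IsSelfAdjoint a → MeasurableSet B →
    R.specProj (i1 a) B = i1 (Q.specProj a B)
  specProj_snd : ∀ (a : M) (B : Set ℝ), IsSelfAdjoint a → MeasurableSet B →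
    R.specProj (i2 a) B = i2 (Q.specProj a B)

/-! With `p = e_λ^⊥(x - m)` and `q = E_x((-∞, m])`, the projection `r = (p ⊗ 1)(1 ⊗ q)` commutes
with `x̂ = (x - m) ⊗ 1 - 1 ⊗ (x - m)`, and `r x̂ r ≥ λ r` because `x - m ≥ λ` on `p` and
`x - m ≤ 0` on `q`. A commuting projection on which `x̂ ≥ λ` lies below `E_x̂([λ', ∞))` for
every `λ' < λ`, hence by normality below `e_λ^⊥(x̂)` in trace. Finally
`(τ ⊗ τ)(r) = τ(p) τ(q) ≥ τ(p) / 2` since `m` is a median. -/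

open MeasureTheory Set Filter Topology

namespace QuantumProbabilitySpace

variable {M : Type*} [CStarAlgebra M] [PartialOrder M] [StarOrderedRing M]
variable (Q : QuantumProbabilitySpace M) {x : M}

lemma isStarProjection_specProj (hx : IsSelfAdjoint x) {B : Set ℝ} (hB : MeasurableSet B) :
    IsStarProjection (Q.specProj x B) :=
  ⟨Q.specProj_isIdempotentElem x B hx hB, Q.specProj_isSelfAdjoint x B hx hB⟩

lemma re_tau_mono {a b : M} (h : a ≤ b) : (Q.τ a).re ≤ (Q.τ b).re := by
  have := (Q.pos _ (sub_nonneg.mpr h)).1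
  rwa [map_sub, Complex.sub_re, sub_nonneg] at this

lemma eq_zero_of_re_tau_nonpos {a : M} (ha : 0 ≤ a) (h : (Q.τ a).re ≤ 0) : a = 0 :=
  Q.faithful a ha <| Complex.ext (le_antisymm h (Q.pos a ha).1) (Q.pos a ha).2

lemma im_tau_specProj (hx : IsSelfAdjoint x) {B : Set ℝ} (hB : MeasurableSet B) :
    (Q.τ (Q.specProj x B)).im = 0 :=
  (Q.pos _ (Q.isStarProjection_specProj hx hB).nonneg).2

lemma prob_nonneg (hx : IsSelfAdjoint x) {B : Set ℝ} (hB : MeasurableSet B) :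
    0 ≤ Q.prob x B :=
  (Q.pos _ (Q.isStarProjection_specProj hx hB).nonneg).1

lemma hasSum_prob_iUnion (hx : IsSelfAdjoint x) {B : ℕ → Set ℝ} (hB : ∀ n, MeasurableSet (B n))
    (hd : Pairwise (Function.onFun Disjoint B)) :
    HasSum (fun n ↦ Q.prob x (B n)) (Q.prob x (⋃ n, B n)) :=
  Complex.reCLM.hasSum (Q.specProj_iUnion x B hx hB hd)

lemma prob_empty (hx : IsSelfAdjoint x) : Q.prob x ∅ = 0 := by
  have h := Q.hasSum_prob_iUnion hx (B := fun _ ↦ ∅) (fun _ ↦ .empty)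
    (fun _ _ _ ↦ Set.empty_disjoint _)
  rw [iUnion_empty] at h
  exact tendsto_nhds_unique tendsto_const_nhds h.summable.tendsto_atTop_zero

noncomputable def spectralMeasure (hx : IsSelfAdjoint x) : Measure ℝ :=
  Measure.ofMeasurable (fun B _ ↦ ENNReal.ofReal (Q.prob x B)) (by simp [Q.prob_empty hx])
    fun B hB hd ↦ by
      rw [(Q.hasSum_prob_iUnion hx hB hd).tsum_eq.symm,
        ENNReal.ofReal_tsum_of_nonneg (fun n ↦ Q.prob_nonneg hx (hB n))
          (Q.hasSum_prob_iUnion hx hB hd).summable]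

lemma measureReal_spectralMeasure (hx : IsSelfAdjoint x) {B : Set ℝ} (hB : MeasurableSet B) :
    (Q.spectralMeasure hx).real B = Q.prob x B := by
  rw [measureReal_def, spectralMeasure, Measure.ofMeasurable_apply B hB,
    ENNReal.toReal_ofReal (Q.prob_nonneg hx hB)]

instance (hx : IsSelfAdjoint x) : IsProbabilityMeasure (Q.spectralMeasure hx) := by
  constructor
  rw [spectralMeasure, Measure.ofMeasurable_apply _ .univ, prob, Q.specProj_univ x hx,
    Q.normalized, Complex.one_re, ENNReal.ofReal_one]

lemma prob_add_prob_compl (hx : IsSelfAdjoint x) {B : Set ℝ} (hB : MeasurableSet B) :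
    Q.prob x B + Q.prob x Bᶜ = 1 := by
  rw [← Q.measureReal_spectralMeasure hx hB, ← Q.measureReal_spectralMeasure hx hB.compl,
    measureReal_add_measureReal_compl hB, probReal_univ]

lemma specProj_empty (hx : IsSelfAdjoint x) : Q.specProj x ∅ = 0 :=
  Q.eq_zero_of_re_tau_nonpos (Q.isStarProjection_specProj hx .empty).nonneg
    (Q.prob_empty hx).le

lemma specProj_compl (hx : IsSelfAdjoint x) {B : Set ℝ} (hB : MeasurableSet B) :
    Q.specProj x Bᶜ = 1 - Q.specProj x B := by
  have hB' := Q.isStarProjection_specProj hx hB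
  have hBc := Q.isStarProjection_specProj hx hB.compl
  have hsum : IsStarProjection (Q.specProj x B + Q.specProj x Bᶜ) := hB'.add hBc <| by
    rw [← Q.specProj_inter x _ _ hx hB hB.compl, inter_compl_self, Q.specProj_empty hx]
  have hrest : 1 - (Q.specProj x B + Q.specProj x Bᶜ) = 0 := by
    refine Q.eq_zero_of_re_tau_nonpos hsum.one_sub.nonneg (le_of_eq ?_)
    have := Q.prob_add_prob_compl hx hB
    rw [prob, prob] at this
    rw [map_sub, map_add, Complex.sub_re, Complex.add_re, Q.normalized, Complex.one_re, this,
      sub_self]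
  rw [eq_sub_iff_add_eq']
  exact (sub_eq_zero.mp hrest).symm

lemma le_prob_Ici_of_forall_lt (hx : IsSelfAdjoint x) {c l : ℝ}
    (h : ∀ t < l, c ≤ Q.prob x (Ioi t)) : c ≤ Q.prob x (Ici l) := by
  set s : ℕ → Set ℝ := fun n ↦ Ioi (l - 1 / (n + 1))
  have hs : ⋂ n, s n = Ici l := by
    ext z
    simp only [s, mem_iInter, mem_Ioi, mem_Ici]
    refine ⟨fun hz ↦ le_of_not_gt fun hzl ↦ ?_, fun hz n ↦ ?_⟩
    · obtain ⟨n, hn⟩ := exists_nat_one_div_lt (sub_pos.mpr hzl)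
      linarith [hz n]
    · linarith [Nat.one_div_pos_of_nat (α := ℝ) (n := n)]
  have hanti : Antitone s := fun i j hij ↦ Ioi_subset_Ioi <| sub_le_sub_left
    (Nat.one_div_le_one_div hij) l
  have hlim := tendsto_measure_iInter_atTop (μ := Q.spectralMeasure hx)
    (fun n ↦ measurableSet_Ioi.nullMeasurableSet) hanti ⟨0, measure_ne_top _ _⟩
  rw [hs] at hlim
  have hlim' := (ENNReal.tendsto_toReal (measure_ne_top _ _)).comp hlim
  rw [← Q.measureReal_spectralMeasure hx measurableSet_Ici]
  refine ge_of_tendsto' hlim' fun n ↦ ?_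
  rw [Function.comp_apply, Function.comp_apply, ← measureReal_def,
    Q.measureReal_spectralMeasure hx measurableSet_Ioi]
  exact h _ (sub_lt_self l Nat.one_div_pos_of_nat)

lemma tau_conj_eq {a q : M} (hq : IsIdempotentElem q) : Q.τ (q * a * q) = Q.τ (a * q) := by
  rw [Q.tracial, ← mul_assoc, hq.eq, Q.tracial]

lemma re_tau_mul_mono {a b q : M} (hq : IsStarProjection q) (h : a ≤ b) :
    (Q.τ (a * q)).re ≤ (Q.τ (b * q)).re := by
  simpa only [Q.tau_conj_eq hq.isIdempotentElem] using
    Q.re_tau_mono (hq.isSelfAdjoint.conjugate_le_conjugate h)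

lemma tau_mul_eq_tau_star_mul_self {p q : M} (hp : IsStarProjection p) (hq : IsStarProjection q) :
    Q.τ (q * p) = Q.τ (star (q * p) * (q * p)) := by
  rw [star_mul, hp.isSelfAdjoint.star_eq, hq.isSelfAdjoint.star_eq, mul_assoc, ← mul_assoc q,
    hq.isIdempotentElem.eq, ← mul_assoc, Q.tau_conj_eq hp.isIdempotentElem]

lemma re_tau_mul_nonneg {p q : M} (hp : IsStarProjection p) (hq : IsStarProjection q) :
    0 ≤ (Q.τ (q * p)).re := by
  rw [Q.tau_mul_eq_tau_star_mul_self hp hq]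
  exact (Q.pos _ (star_mul_self_nonneg _)).1

lemma mul_eq_zero_of_re_tau_mul_nonpos {p q : M} (hp : IsStarProjection p)
    (hq : IsStarProjection q) (h : (Q.τ (q * p)).re ≤ 0) : q * p = 0 :=
  (CStarRing.star_mul_self_eq_zero_iff _).mp <| Q.eq_zero_of_re_tau_nonpos
    (star_mul_self_nonneg _) (by rwa [← Q.tau_mul_eq_tau_star_mul_self hp hq])

/-- With `f = E_y((-∞, t])`, compressing by `r` and by `f` gives
`l τ(r f) ≤ τ(y r f) ≤ t τ(r f)`, so `τ(r f) = 0` and faithfulness kills `r f`. -/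
lemma mul_specProj_Iic_eq_zero {y r : M} (hy : IsSelfAdjoint y) (hr : IsStarProjection r)
    (hyr : Commute y r) {l t : ℝ} (htl : t < l) (hge : (l : ℂ) • r ≤ r * y * r) :
    r * Q.specProj y (Iic t) = 0 := by
  set f := Q.specProj y (Iic t)
  have hf : IsStarProjection f := Q.isStarProjection_specProj hy measurableSet_Iic
  have hyf : Commute y f := Q.specProj_commute y _ hy measurableSet_Iic
  have hlow : l * (Q.τ (r * f)).re ≤ (Q.τ (y * r * f)).re := by
    have h := Q.re_tau_mul_mono hf hge
    rwa [smul_mul_assoc, map_smul, smul_eq_mul, Complex.re_ofReal_mul, ← hyr.eq, mul_assoc y,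
      hr.isIdempotentElem.eq] at h
  have hup : (Q.τ (y * r * f)).re ≤ t * (Q.τ (r * f)).re := by
    have hfyf : f * y * f ≤ (t : ℂ) • f := Q.specProj_le y t hy
    have h := Q.re_tau_mul_mono hr hfyf
    rwa [smul_mul_assoc, map_smul, smul_eq_mul, Complex.re_ofReal_mul, ← hyf.eq, mul_assoc y f f,
      hf.isIdempotentElem.eq, Q.tracial (y * f) r, ← mul_assoc, ← hyr.eq, Q.tracial f r] at h
  have hnonneg := Q.re_tau_mul_nonneg hf hr
  exact Q.mul_eq_zero_of_re_tau_mul_nonpos hf hr (by nlinarith)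

lemma re_tau_le_prob_Ici {y r : M} (hy : IsSelfAdjoint y) (hr : IsStarProjection r)
    (hyr : Commute y r) {l : ℝ} (hge : (l : ℂ) • r ≤ r * y * r) :
    (Q.τ r).re ≤ Q.prob y (Ici l) := by
  refine Q.le_prob_Ici_of_forall_lt hy fun t htl ↦ Q.re_tau_mono ?_
  rw [← compl_Iic, Q.specProj_compl hy measurableSet_Iic]
  refine hr.le_of_mul_eq_left (Q.isStarProjection_specProj hy measurableSet_Iic).one_sub ?_
  rw [mul_sub, mul_one, Q.mul_specProj_Iic_eq_zero hy hr hyr htl hge, sub_zero]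

lemma specProj_Iic_mul_sub_mul_nonpos (hx : IsSelfAdjoint x) (t : ℝ) :
    Q.specProj x (Iic t) * (x - (t : ℂ) • 1) * Q.specProj x (Iic t) ≤ 0 := by
  rw [mul_sub, sub_mul, mul_smul_one, smul_mul_assoc,
    (Q.isStarProjection_specProj hx measurableSet_Iic).isIdempotentElem.eq, sub_nonpos]
  exact Q.specProj_le x t hx

end QuantumProbabilitySpace

lemma conj_conj_eq_conj_mul {A : Type*} [Ring A] {p q a : A} (hq : IsIdempotentElem q)
    (hpq : Commute p q) (haq : Commute a q) : q * (p * a * p) * q = p * q * a * (p * q) := by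
  rw [← ((hpq.mul_left haq).mul_left hpq).eq]
  simp only [mul_assoc]
  rw [hq.eq, ← mul_assoc q a, ← haq.eq, mul_assoc, ← mul_assoc q p, ← hpq.eq, mul_assoc, hq.eq]

namespace QuantumProbabilitySpace.IsTensorSquare

variable {M N : Type*} [CStarAlgebra M] [PartialOrder M] [StarOrderedRing M]
  [CStarAlgebra N] [PartialOrder N] [StarOrderedRing N]
  {Q : QuantumProbabilitySpace M} {R : QuantumProbabilitySpace N} {i1 i2 : M →⋆ₐ[ℂ] N}

lemma re_tau_mul {a b : M} (hts : Q.IsTensorSquare R i1 i2) (ha : (Q.τ a).im = 0) :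
    (R.τ (i1 a * i2 b)).re = (Q.τ a).re * (Q.τ b).re := by
  rw [hts.trace_mul, Complex.mul_re, ha, zero_mul, sub_zero]

lemma commute_sub_mul (hts : Q.IsTensorSquare R i1 i2) {a p q : M} (hap : Commute a p)
    (haq : Commute a q) : Commute (i1 a - i2 a) (i1 p * i2 q) :=
  ((hap.map i1).mul_right (hts.commutes a q)).sub_left
    ((hts.commutes p a).symm.mul_right (haq.map i2))

lemma smul_le_compress_sub (hts : Q.IsTensorSquare R i1 i2) {a b p q : M}
    (hp : IsStarProjection p) (hq : IsStarProjection q) {c : ℝ}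
    (hpa : (c : ℂ) • p ≤ p * a * p) (hqb : q * b * q ≤ 0) :
    (c : ℂ) • (i1 p * i2 q) ≤ i1 p * i2 q * (i1 a - i2 b) * (i1 p * i2 q) := by
  have hpq := hts.commutes p q
  have ha : (c : ℂ) • (i1 p * i2 q) ≤ i1 p * i2 q * i1 a * (i1 p * i2 q) := by
    have h := (hq.map i2).isSelfAdjoint.conjugate_le_conjugate (OrderHomClass.mono i1 hpa)
    rwa [map_smul, mul_smul_comm, smul_mul_assoc, ← hpq.eq, mul_assoc,
      (hq.map i2).isIdempotentElem.eq, map_mul, map_mul,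
      conj_conj_eq_conj_mul (hq.map i2).isIdempotentElem hpq (hts.commutes a q)] at h
  have hb : i1 p * i2 q * i2 b * (i1 p * i2 q) ≤ 0 := by
    have h := (hp.map i1).isSelfAdjoint.conjugate_le_conjugate (OrderHomClass.mono i2 hqb)
    rwa [map_zero, mul_zero, zero_mul, map_mul, map_mul, conj_conj_eq_conj_mul
      (hp.map i1).isIdempotentElem hpq.symm (hts.commutes p b).symm, ← hpq.eq] at h
  rw [mul_sub, sub_mul]
  simpa using sub_le_sub ha hb

end QuantumProbabilitySpace.IsTensorSquare

/-- **Noncommutative weak symmetrization inequality**, first part: if `m` is a median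
of the self-adjoint `x` and `x̂ = x ⊗ 1 - 1 ⊗ x`, then for every `λ ∈ ℝ`,
`τ(e_λ^⊥(x - m)) ≤ 2 (τ ⊗ τ)(e_λ^⊥(x̂))`. -/
theorem noncommutative_weak_symmetrization_first {M N : Type*}
    [CStarAlgebra M] [PartialOrder M] [StarOrderedRing M]
    [CStarAlgebra N] [PartialOrder N] [StarOrderedRing N]
    (Q : QuantumProbabilitySpace M) (R : QuantumProbabilitySpace N)
    (i1 i2 : M →⋆ₐ[ℂ] N) (hts : Q.IsTensorSquare R i1 i2)
    (x : M) (hx : IsSelfAdjoint x) (m : ℝ) (hm : Q.IsMedian x m) (l : ℝ) :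
    Q.prob (x - (m : ℂ) • 1) (Set.Ici l) ≤ 2 * R.prob (i1 x - i2 x) (Set.Ici l) := by
  set x₀ := x - (m : ℂ) • 1
  have hx₀ : IsSelfAdjoint x₀ := hx.sub (IsSelfAdjoint.smul (Complex.conj_ofReal m) (.one M))
  have hy : i1 x - i2 x = i1 x₀ - i2 x₀ := by
    simp only [x₀, map_sub, map_smul, map_one, sub_sub_sub_cancel_right]
  rw [hy]
  set p := Q.specProj x₀ (Ici l)
  set q := Q.specProj x (Iic m)
  have hp : IsStarProjection p := Q.isStarProjection_specProj hx₀ measurableSet_Ici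
  have hq : IsStarProjection q := Q.isStarProjection_specProj hx measurableSet_Iic
  have hx₀q : Commute x₀ q := (Q.specProj_commute x _ hx measurableSet_Iic).sub_left
    ((Commute.one_left q).smul_left _)
  calc Q.prob x₀ (Ici l) ≤ 2 * (Q.prob x₀ (Ici l) * Q.prob x (Iic m)) := by
        nlinarith [hm.1, Q.prob_nonneg hx₀ (measurableSet_Ici (a := l))]
    _ = 2 * (R.τ (i1 p * i2 q)).re := by
        rw [hts.re_tau_mul (Q.im_tau_specProj hx₀ measurableSet_Ici)]
        rfl
    _ ≤ 2 * R.prob (i1 x₀ - i2 x₀) (Ici l) := by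
        gcongr
        refine R.re_tau_le_prob_Ici ((hx₀.map i1).sub (hx₀.map i2))
          ((hp.map i1).mul (hq.map i2) (hts.commutes p q)) ?_ ?_
        · exact hts.commute_sub_mul (Q.specProj_commute x₀ _ hx₀ measurableSet_Ici) hx₀q
        · exact hts.smul_le_compress_sub hp hq (Q.specProj_ge x₀ l hx₀)
            (Q.specProj_Iic_mul_sub_mul_nonpos hx m)
end
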